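/- In a stable marriage instance with ties where ties appear only in the preference lists of one side (say only women have ties), any stable matching M with no feminine dangerous path satisfies |M_opt| ≤ (3/2)|M| for every matching M_opt that is stable, provided also no masculine dangerous path exists; moreover since men's lists are strict, no masculine dangerous path can exist, so it suffices that M has no feminine dangerous path. -/

import Mathlib

/-- An instance of the stable marriage problem with ties: a bipartite
acceptability relation between men `U` and women `W`, together with preference
lists given by rank functions (a smaller rank means a more preferred partner;
equal ranks encode ties, i.e. indifference). -/
structure SMI (U W : Type*) where
  acc : U → W → Prop
  mrank : U → W → ℕ
  wrank : W → U → ℕ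

namespace SMI

variable {U W : Type*}

/-- A matching: a set of mutually acceptable pairs in which every man and
every woman appears at most once. -/
def IsMatching (I : SMI U W) (M : Finset (U × W)) : Prop :=
  (∀ p ∈ M, I.acc p.1 p.2) ∧
  (∀ p ∈ M, ∀ q ∈ M, p.1 = q.1 → p = q) ∧
  (∀ p ∈ M, ∀ q ∈ M, p.2 = q.2 → p = q)

/-- Man `m` is unmatched (free) in `M`. -/
def ManUnmatched (M : Finset (U × W)) (m : U) : Prop := ∀ w, (m, w) ∉ M

/-- Woman `w` is unmatched (free) in `M`. -/
def WomanUnmatched (M : Finset (U × W)) (w : W) : Prop := ∀ m, (m, w) ∉ M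

/-- `(m, w)` is a blocking pair for `M`: they are mutually acceptable, not
matched to each other, `m` is unmatched or strictly prefers `w` to his partner,
and `w` is unmatched or strictly prefers `m` to her partner. -/
def Blocking (I : SMI U W) (M : Finset (U × W)) (m : U) (w : W) : Prop :=
  I.acc m w ∧ (m, w) ∉ M ∧
  (∀ w', (m, w') ∈ M → I.mrank m w < I.mrank m w') ∧
  (∀ m', (m', w) ∈ M → I.wrank w m < I.wrank w m')

/-- `M` is a stable matching: a matching admitting no blocking pair. -/
def Stable (I : SMI U W) (M : Finset (U × W)) : Prop :=
  I.IsMatching M ∧ ∀ m w, ¬ I.Blocking M m w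

/-- A dangerous path `(w, m₁, w₁, m)` with respect to `M`: an alternating path
with `(m₁, w₁) ∈ M`, the edges `(m₁, w)` and `(m, w₁)` present but not in `M`,
`w` and `m` unmatched in `M`, such that `(m₁, w₁)` is not a blocking pair for
the matching `M' = {(m₁, w), (m, w₁)}`. -/
def DangerousPath [DecidableEq U] [DecidableEq W] (I : SMI U W) (M : Finset (U × W))
    (w : W) (m₁ : U) (w₁ : W) (m : U) : Prop :=
  I.acc m₁ w ∧ I.acc m w₁ ∧ (m₁, w₁) ∈ M ∧ (m₁, w) ∉ M ∧ (m, w₁) ∉ M ∧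
  WomanUnmatched M w ∧ ManUnmatched M m ∧
  ¬ I.Blocking ({(m₁, w), (m, w₁)} : Finset (U × W)) m₁ w₁

end SMI

/-- A masculine dangerous path `(w, m₁, w₁, m)` with respect to `M`:
an alternating path with `(m₁, w₁) ∈ M`, `w` and `m` unmatched, where `m₁` is
indifferent between `w` and `w₁`. -/
def SMI.MasculineDP {U W : Type*} (I : SMI U W) (M : Finset (U × W))
    (w : W) (m₁ : U) (w₁ : W) (m : U) : Prop :=
  I.acc m₁ w ∧ I.acc m w₁ ∧ (m₁, w₁) ∈ M ∧ (m₁, w) ∉ M ∧ (m, w₁) ∉ M ∧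
  SMI.WomanUnmatched M w ∧ SMI.ManUnmatched M m ∧ I.mrank m₁ w = I.mrank m₁ w₁

/-- A feminine dangerous path `(w, m₁, w₁, m)` with respect to `M`:
an alternating path with `(m₁, w₁) ∈ M`, `w` and `m` unmatched, where `w₁` is
indifferent between `m` and `m₁`. -/
def SMI.FeminineDP {U W : Type*} (I : SMI U W) (M : Finset (U × W))
    (w : W) (m₁ : U) (w₁ : W) (m : U) : Prop :=
  I.acc m₁ w ∧ I.acc m w₁ ∧ (m₁, w₁) ∈ M ∧ (m₁, w) ∉ M ∧ (m, w₁) ∉ M ∧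
  SMI.WomanUnmatched M w ∧ SMI.ManUnmatched M m ∧ I.wrank w₁ m = I.wrank w₁ m₁


/-!
Since men's lists are strict, a man is never indifferent between two acceptable women, so masculine
dangerous paths cannot exist. For the bound, stability of `M` rules out augmenting paths of length
one in `M ⊕ Mopt`, and a length-three augmenting path `(w, m₁, w₁, m)` would make `(m₁, w₁)` block
`Mopt`: stability of `M` gives `m₁` weakly preferring `w₁` to `w` and `w₁` weakly preferring `m₁`
to `m`, strict men's lists make the first preference strict, and the absence of feminine dangerous
paths makes the second one strict. A double count then shows that a matching without augmenting
paths of length one or three is at least two thirds as large as any other matching.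
-/

open Finset

namespace SMI

variable {U W : Type*}

section Counting

variable {M N : Finset (U × W)}

open scoped Classical in
/-- Each of these edges is sent injectively, along the `N`-edge at its man, to an `M`-edge outside
the set. -/
theorem two_mul_card_filter_le_card (hM : Set.InjOn Prod.fst (M : Set (U × W)))
    (hN : Set.InjOn Prod.snd (N : Set (U × W)))
    (hno3 : ∀ m₁ w₁ m w, (m₁, w₁) ∈ M → (m₁, w) ∈ N → (m, w₁) ∈ N → ManUnmatched M m →
      ¬ WomanUnmatched M w) :
    2 * #{f ∈ M | (∃ w, (f.1, w) ∈ N) ∧ ∃ m, (m, f.2) ∈ N ∧ ManUnmatched M m} ≤ #M := by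
  set D := {f ∈ M | (∃ w, (f.1, w) ∈ N) ∧ ∃ m, (m, f.2) ∈ N ∧ ManUnmatched M m}
  have hDM : D ⊆ M := filter_subset _ _
  have hD : #D ≤ #(M \ D) := by
    refine card_le_card_of_forall_subsingleton (fun f g => (f.1, g.2) ∈ N) ?_ ?_
    · rintro ⟨m₁, w₁⟩ hf
      obtain ⟨hfM, ⟨w, he⟩, m, he', hm⟩ := mem_filter.mp hf
      obtain ⟨m₂, hg⟩ := not_forall_not.mp (hno3 m₁ w₁ m w hfM he he' hm)
      refine ⟨(m₂, w), mem_sdiff.mpr ⟨hg, fun hgD => ?_⟩, he⟩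
      obtain ⟨-, -, m', he'', hm'⟩ := mem_filter.mp hgD
      exact hm' w₁ ((Prod.mk.inj (hN he'' he rfl)).1 ▸ hfM)
    · rintro g - f ⟨hfD, hf⟩ f' ⟨hf'D, hf'⟩
      exact hM (hDM hfD) (hDM hf'D) (Prod.mk.inj (hN hf hf' rfl)).1
  have := card_sdiff_add_card_eq_card hDM
  omega

theorem two_mul_card_le_three_mul_card (hM : Set.InjOn Prod.fst (M : Set (U × W)))
    (hN₁ : Set.InjOn Prod.fst (N : Set (U × W))) (hN₂ : Set.InjOn Prod.snd (N : Set (U × W)))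
    (hno1 : ∀ m w, (m, w) ∈ N → ManUnmatched M m → ¬ WomanUnmatched M w)
    (hno3 : ∀ m₁ w₁ m w, (m₁, w₁) ∈ M → (m₁, w) ∈ N → (m, w₁) ∈ N → ManUnmatched M m →
      ¬ WomanUnmatched M w) :
    2 * #N ≤ 3 * #M := by
  classical
  -- charge an `N`-edge to the `M`-edge at its man if there is one, else to the `M`-edge at its woman
  set P := {f ∈ M | ∃ w, (f.1, w) ∈ N}
  set Q := {f ∈ M | ∃ m, (m, f.2) ∈ N ∧ ManUnmatched M m}
  have hP : #{e ∈ N | ¬ ManUnmatched M e.1} ≤ #P := by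
    refine card_le_card_of_forall_subsingleton (fun e f => e.1 = f.1) ?_ ?_
    · rintro ⟨m, w⟩ he
      obtain ⟨he, hm⟩ := mem_filter.mp he
      obtain ⟨w', hf⟩ := not_forall_not.mp hm
      exact ⟨(m, w'), mem_filter.mpr ⟨hf, w, he⟩, rfl⟩
    · rintro f - e ⟨he, hef⟩ e' ⟨he', he'f⟩
      exact hN₁ (filter_subset _ _ he) (filter_subset _ _ he') (hef.trans he'f.symm)
  have hQ : #{e ∈ N | ManUnmatched M e.1} ≤ #Q := by
    refine card_le_card_of_forall_subsingleton (fun e f => e.2 = f.2) ?_ ?_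
    · rintro ⟨m, w⟩ he
      obtain ⟨he, hm⟩ := mem_filter.mp he
      obtain ⟨m', hf⟩ := not_forall_not.mp (hno1 m w he hm)
      exact ⟨(m', w), mem_filter.mpr ⟨hf, m, he, hm⟩, rfl⟩
    · rintro f - e ⟨he, hef⟩ e' ⟨he', he'f⟩
      exact hN₂ (filter_subset _ _ he) (filter_subset _ _ he') (hef.trans he'f.symm)
  have hPQ : #(P ∪ Q) ≤ #M := card_le_card (union_subset (filter_subset _ _) (filter_subset _ _))
  have hD : 2 * #(P ∩ Q) ≤ #M := by
    rw [← filter_and]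
    exact two_mul_card_filter_le_card hM hN₂ hno3
  have := card_union_add_card_inter P Q
  have := card_filter_add_card_filter_not (s := N) (fun e => ¬ ManUnmatched M e.1)
  simp only [not_not] at this
  omega

end Counting

variable {I : SMI U W} {M N : Finset (U × W)} {m m₁ : U} {w w₁ : W}

theorem IsMatching.injOn_fst (hM : I.IsMatching M) : Set.InjOn Prod.fst (M : Set (U × W)) :=
  fun p hp q hq => hM.2.1 p hp q hq

theorem IsMatching.injOn_snd (hM : I.IsMatching M) : Set.InjOn Prod.snd (M : Set (U × W)) :=
  fun p hp q hq => hM.2.2 p hp q hq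

theorem IsMatching.snd_eq (hM : I.IsMatching M) (h : (m, w) ∈ M) (h₁ : (m, w₁) ∈ M) : w = w₁ :=
  congrArg Prod.snd (hM.injOn_fst h h₁ rfl)

theorem IsMatching.fst_eq (hM : I.IsMatching M) (h : (m, w) ∈ M) (h₁ : (m₁, w) ∈ M) : m = m₁ :=
  congrArg Prod.fst (hM.injOn_snd h h₁ rfl)

theorem IsMatching.blocking_of_lt (hN : I.IsMatching N) (hacc : I.acc m₁ w₁) (he : (m₁, w) ∈ N)
    (he' : (m, w₁) ∈ N) (hman : I.mrank m₁ w₁ < I.mrank m₁ w)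
    (hwoman : I.wrank w₁ m₁ < I.wrank w₁ m) : I.Blocking N m₁ w₁ := by
  refine ⟨hacc, fun h => hman.ne (by rw [hN.snd_eq h he]), fun w' h => ?_, fun m' h => ?_⟩
  · rwa [hN.snd_eq h he]
  · rwa [hN.fst_eq h he']

theorem Stable.not_womanUnmatched (hM : I.Stable M) (hacc : I.acc m w) (hm : ManUnmatched M m) :
    ¬ WomanUnmatched M w := fun hw =>
  hM.2 m w ⟨hacc, hm w, fun w' h => (hm w' h).elim, fun m' h => (hw m' h).elim⟩

theorem Stable.mrank_le (hM : I.Stable M) (hf : (m₁, w₁) ∈ M) (hacc : I.acc m₁ w)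
    (hw : WomanUnmatched M w) : I.mrank m₁ w₁ ≤ I.mrank m₁ w := by
  by_contra! hlt
  refine hM.2 m₁ w ⟨hacc, hw m₁, fun w' h => ?_, fun m' h => (hw m' h).elim⟩
  rwa [hM.1.snd_eq h hf]

theorem Stable.wrank_le (hM : I.Stable M) (hf : (m₁, w₁) ∈ M) (hacc : I.acc m w₁)
    (hm : ManUnmatched M m) : I.wrank w₁ m₁ ≤ I.wrank w₁ m := by
  by_contra! hlt
  refine hM.2 m w₁ ⟨hacc, hm w₁, fun w' h => (hm w' h).elim, fun m' h => ?_⟩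
  rwa [hM.1.fst_eq h hf]

theorem Stable.not_womanUnmatched_of_augmenting_three
    (hstrictM : ∀ m w w', I.acc m w → I.acc m w' → I.mrank m w = I.mrank m w' → w = w')
    (hnf : ∀ w m₁ w₁ m, ¬ I.FeminineDP M w m₁ w₁ m) (hM : I.Stable M) (hN : I.Stable N)
    (hf : (m₁, w₁) ∈ M) (he : (m₁, w) ∈ N) (he' : (m, w₁) ∈ N) (hm : ManUnmatched M m) :
    ¬ WomanUnmatched M w := by
  intro hw
  have hacc : I.acc m₁ w := hN.1.1 _ he
  have hacc' : I.acc m w₁ := hN.1.1 _ he'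
  have hman : I.mrank m₁ w₁ < I.mrank m₁ w := by
    refine (hM.mrank_le hf hacc hw).lt_of_ne fun h => ?_
    exact hw m₁ (hstrictM m₁ w₁ w (hM.1.1 _ hf) hacc h ▸ hf)
  have hwoman : I.wrank w₁ m₁ < I.wrank w₁ m := by
    refine (hM.wrank_le hf hacc' hm).lt_of_ne fun h => ?_
    exact hnf w m₁ w₁ m ⟨hacc, hacc', hf, hw m₁, hm w₁, hw, hm, h.symm⟩
  exact hN.2 m₁ w₁ (hN.1.blocking_of_lt (hM.1.1 _ hf) he he' hman hwoman)

theorem not_masculineDP_of_strict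
    (hstrictM : ∀ m w w', I.acc m w → I.acc m w' → I.mrank m w = I.mrank m w' → w = w')
    (hM : I.IsMatching M) (w : W) (m₁ : U) (w₁ : W) (m : U) : ¬ I.MasculineDP M w m₁ w₁ m :=
  fun ⟨hacc, _, hf, hnot, _, _, _, h⟩ => hnot (hstrictM m₁ w w₁ hacc (hM.1 _ hf) h ▸ hf)

end SMI

theorem one_sided_ties_no_feminine_dangerous_path_three_halves_general
    {U W : Type*}
    (I : SMI U W)
    (hstrictM : ∀ m w w', I.acc m w → I.acc m w' → I.mrank m w = I.mrank m w' → w = w')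
    (M : Finset (U × W)) (hM : I.Stable M)
    (hnf : ∀ (w : W) (m₁ : U) (w₁ : W) (m : U), ¬ I.FeminineDP M w m₁ w₁ m) :
    (∀ (w : W) (m₁ : U) (w₁ : W) (m : U), ¬ I.MasculineDP M w m₁ w₁ m) ∧
    ∀ Mopt : Finset (U × W), I.Stable Mopt → (Mopt.card : ℝ) ≤ 3 / 2 * M.card := by
  refine ⟨SMI.not_masculineDP_of_strict hstrictM hM.1, fun Mopt hMopt => ?_⟩
  have h : 2 * Mopt.card ≤ 3 * M.card :=
    SMI.two_mul_card_le_three_mul_card hM.1.injOn_fst hMopt.1.injOn_fst hMopt.1.injOn_snd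
      (fun _ _ he hm => hM.not_womanUnmatched (hMopt.1.1 _ he) hm)
      (fun _ _ _ _ hf he he' hm =>
        hM.not_womanUnmatched_of_augmenting_three hstrictM hnf hMopt hf he he' hm)
  have h' : (2 * Mopt.card : ℝ) ≤ 3 * M.card := by exact_mod_cast h
  linarith

/-- in an instance with one-sided ties (men's lists are strict),
a stable matching `M` with no feminine dangerous path admits no masculine
dangerous path either (strict men's lists forbid them), and satisfies
`|Mopt| ≤ (3/2)·|M|` for every stable matching `Mopt`. -/
theorem one_sided_ties_no_feminine_dangerous_path_three_halves
    {U W : Type*} [DecidableEq U] [DecidableEq W] [Fintype U] [Fintype W]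
    (I : SMI U W)
    (hstrictM : ∀ m w w', I.acc m w → I.acc m w' → I.mrank m w = I.mrank m w' → w = w')
    (M : Finset (U × W)) (hM : I.Stable M)
    (hnf : ∀ (w : W) (m₁ : U) (w₁ : W) (m : U), ¬ I.FeminineDP M w m₁ w₁ m) :
    (∀ (w : W) (m₁ : U) (w₁ : W) (m : U), ¬ I.MasculineDP M w m₁ w₁ m) ∧
    ∀ Mopt : Finset (U × W), I.Stable Mopt → (Mopt.card : ℝ) ≤ 3 / 2 * M.card :=
  one_sided_ties_no_feminine_dangerous_path_three_halves_general I hstrictM M hM hnf
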